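/- Let b be a square-free integer with b ∉ {0, 3, 5} such that 256 - 27*b is square-free. Then the Galois group of the splitting field of x^4 + b*x + b over the rationals is isomorphic to the symmetric group S_4. -/

import Mathlib

/-!
For a quartic trinomial `f = X⁴ + pX + q` with roots `r₁, …, r₄` in its splitting field, the roots
have vanishing first two elementary symmetric functions, so `θ = r₁r₂ + r₃r₄` is a root of the
resolvent cubic `X³ - 4qX - p²` and `δ = ∏_{i<j} (rᵢ - rⱼ)` satisfies `δ² = 256q³ - 27p⁴`.
If `f` and the resolvent are irreducible, `[ℚ(r₁) : ℚ] = 4` and `[ℚ(θ) : ℚ] = 3` both divide the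
order of `Gal(f) ≤ S₄`, which is therefore 12 or 24. If the discriminant is not a square, `ℚ(δ)`
is a quadratic subfield, so `Gal(f)` has a subgroup of index 2; but a group of order 12 inside
`S₄` is `A₄`, which has none.

For `f = X⁴ + bX + b` with `b` square-free: `f` is Eisenstein at 2 when `b` is even and reduces to
the irreducible `X⁴ + X + 1` modulo 2 when `b` is odd; an integral root of `X³ - 4bX - b²` forces
`b ∈ {3, 5}`; and `b³(256 - 27b)` is a square only if `b(256 - 27b)` is one, which is negative
unless `1 ≤ b ≤ 9` and is not a square for those nine values.
-/

open Polynomial IntermediateField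

namespace QuarticTrinomial

variable {R : Type*} [CommRing R] {p q r₁ r₂ r₃ r₄ : R}

theorem vieta (h : (X - C r₁) * (X - C r₂) * (X - C r₃) * (X - C r₄) = X ^ 4 + C p * X + C q) :
    r₁ + r₂ + r₃ + r₄ = 0 ∧ r₁ * r₂ + r₁ * r₃ + r₁ * r₄ + r₂ * r₃ + r₂ * r₄ + r₃ * r₄ = 0 ∧
      p = -(r₁ * r₂ * r₃ + r₁ * r₂ * r₄ + r₁ * r₃ * r₄ + r₂ * r₃ * r₄) ∧ q = r₁ * r₂ * r₃ * r₄ := by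
  have hexp : (X - C r₁) * (X - C r₂) * (X - C r₃) * (X - C r₄) =
      X ^ 4 - C (r₁ + r₂ + r₃ + r₄) * X ^ 3
        + C (r₁ * r₂ + r₁ * r₃ + r₁ * r₄ + r₂ * r₃ + r₂ * r₄ + r₃ * r₄) * X ^ 2
        - C (r₁ * r₂ * r₃ + r₁ * r₂ * r₄ + r₁ * r₃ * r₄ + r₂ * r₃ * r₄) * X
        + C (r₁ * r₂ * r₃ * r₄) := by
    simp only [map_add, map_mul]; ring
  rw [hexp] at h
  have h3 := congrArg (coeff · 3) h
  have h2 := congrArg (coeff · 2) h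
  have h1 := congrArg (coeff · 1) h
  have h0 := congrArg (coeff · 0) h
  simp only [coeff_add, coeff_sub, coeff_C_mul, coeff_X_pow, coeff_X, coeff_C] at h3 h2 h1 h0
  norm_num at h3 h2 h1 h0
  exact ⟨by linear_combination -h3, by linear_combination h2, by linear_combination -h1,
    by linear_combination -h0⟩

theorem resolvent_eq_zero
    (h : (X - C r₁) * (X - C r₂) * (X - C r₃) * (X - C r₄) = X ^ 4 + C p * X + C q) :
    (r₁ * r₂ + r₃ * r₄) ^ 3 - 4 * q * (r₁ * r₂ + r₃ * r₄) - p ^ 2 = 0 := by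
  obtain ⟨h1, h2, rfl, rfl⟩ := vieta h
  obtain rfl : r₄ = -(r₁ + r₂ + r₃) := by linear_combination h1
  linear_combination
    ((r₁ * r₂ - r₃ * (r₁ + r₂ + r₃)) ^ 2 + 4 * r₁ * r₂ * r₃ * (r₁ + r₂ + r₃)) * h2

theorem sq_prod_sub_eq_discr
    (h : (X - C r₁) * (X - C r₂) * (X - C r₃) * (X - C r₄) = X ^ 4 + C p * X + C q) :
    ((r₁ - r₂) * (r₁ - r₃) * (r₁ - r₄) * (r₂ - r₃) * (r₂ - r₄) * (r₃ - r₄)) ^ 2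
      = 256 * q ^ 3 - 27 * p ^ 4 := by
  obtain ⟨h1, h2, rfl, rfl⟩ := vieta h
  obtain rfl : r₄ = -(r₁ + r₂ + r₃) := by linear_combination h1
  grind

end QuarticTrinomial

theorem Polynomial.Splits.exists_eq_prod_of_natDegree_eq_four {K : Type*} [Field K] {f : K[X]}
    (hs : f.Splits) (hm : f.Monic) (hd : f.natDegree = 4) :
    ∃ r₁ r₂ r₃ r₄ : K, (X - C r₁) * (X - C r₂) * (X - C r₃) * (X - C r₄) = f := by
  have hcard : Multiset.card f.roots = 4 := by rw [← hs.natDegree_eq_card_roots, hd]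
  obtain ⟨r₁, hr₁⟩ := Multiset.card_pos_iff_exists_mem.mp (by omega : 0 < Multiset.card f.roots)
  obtain ⟨t, ht⟩ := Multiset.exists_cons_of_mem hr₁
  rw [ht, Multiset.card_cons] at hcard
  obtain ⟨r₂, r₃, r₄, rfl⟩ := Multiset.card_eq_three.mp (by omega : Multiset.card t = 3)
  refine ⟨r₁, r₂, r₃, r₄, ?_⟩
  conv_rhs => rw [hs.eq_prod_roots_of_monic hm, ht]
  simp [mul_assoc]

section Galois

variable {F : Type*} [Field F]

theorem IntermediateField.adjoin.finrank_eq_natDegree {E : Type*} [Field E] [Algebra F E]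
    {q : F[X]} (hq : Irreducible q) {x : E} (hx : aeval x q = 0) :
    Module.finrank F F⟮x⟯ = q.natDegree := by
  have hint : IsIntegral F x := isAlgebraic_iff_isIntegral.mp ⟨q, hq.ne_zero, hx⟩
  rw [adjoin.finrank hint, ← minpoly.eq_of_irreducible hq hx,
    natDegree_mul_leadingCoeff_inv _ hq.ne_zero]

namespace Polynomial.Gal

variable {p q : F[X]}

theorem index_fixingSubgroup_adjoin (hp : p.Separable) (hq : Irreducible q)
    {x : p.SplittingField} (hx : aeval x q = 0) :
    (F⟮x⟯.fixingSubgroup : Subgroup p.Gal).index = q.natDegree := by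
  have : IsGalois F p.SplittingField := IsGalois.of_separable_splitting_field hp
  rw [← finrank_eq_fixingSubgroup_index, adjoin.finrank_eq_natDegree hq hx]

theorem natDegree_dvd_card (hp : p.Separable) (hq : Irreducible q) {x : p.SplittingField}
    (hx : aeval x q = 0) : q.natDegree ∣ Nat.card p.Gal :=
  index_fixingSubgroup_adjoin hp hq hx ▸ Subgroup.index_dvd_card _

theorem exists_injective_perm_fin (hp : p.Separable) {n : ℕ} (hn : p.natDegree = n) :
    ∃ ψ : p.Gal →* Equiv.Perm (Fin n), Function.Injective ψ := by
  have hcard : Fintype.card (p.rootSet p.SplittingField) = n :=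
    hn ▸ card_rootSet_eq_natDegree hp (SplittingField.splits p)
  have : Fact (p.map (algebraMap F p.SplittingField)).Splits := ⟨SplittingField.splits p⟩
  let e := Fintype.equivFinOfCardEq hcard
  exact ⟨e.permCongrHom.toMonoidHom.comp (galActionHom p _),
    e.permCongrHom.injective.comp (galActionHom_injective p _)⟩

end Polynomial.Gal

end Galois

section Perm

open Equiv

theorem Subgroup.mem_of_index_eq_two_of_pow_three_eq_one {G : Type*} [Group G] {H : Subgroup G}
    (hH : H.index = 2) {g : G} (hg : g ^ 3 = 1) : g ∈ H := by
  have hg4 : (g ^ 2) ^ 2 = g := by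
    rw [← pow_mul, show 2 * 2 = 3 + 1 from rfl, pow_succ, hg, one_mul]
  exact hg4 ▸ Subgroup.sq_mem_of_index_two hH (g ^ 2)

theorem Equiv.Perm.card_filter_pow_three_eq_one_fin_four :
    (Finset.univ.filter fun σ : Perm (Fin 4) => σ ^ 3 = 1).card = 9 := by
  decide

/-- A subgroup of order 12 of `S₄` has index 2, hence contains the nine elements `σ` with
`σ³ = 1`, and so does each of its subgroups of index 2, which only have order 6. -/
theorem bijective_of_injective_perm_fin_four {G : Type*} [Group G] [Finite G]
    {ψ : G →* Perm (Fin 4)} (hψ : Function.Injective ψ) (h12 : 12 ∣ Nat.card G)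
    {H : Subgroup G} (hH : H.index = 2) : Function.Bijective ψ := by
  have hS4 : Nat.card (Perm (Fin 4)) = 24 := by
    rw [Nat.card_eq_fintype_card, Fintype.card_perm, Fintype.card_fin]; rfl
  have hrange : Nat.card ψ.range = Nat.card G :=
    (Nat.card_congr (MonoidHom.ofInjective hψ).toEquiv).symm
  have hdvd : Nat.card G ∣ 24 := hrange ▸ hS4 ▸ Subgroup.card_subgroup_dvd_card ψ.range
  obtain h24 | h12 : Nat.card G = 24 ∨ Nat.card G = 12 := by
    obtain ⟨k, hk⟩ := h12
    have := Nat.le_of_dvd (by norm_num) hdvd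
    have : 0 < Nat.card G := Nat.card_pos
    omega
  · exact (Nat.bijective_iff_injective_and_card ψ).mpr ⟨hψ, h24.trans hS4.symm⟩
  exfalso
  have hrange2 : ψ.range.index = 2 := by
    have := ψ.range.index_mul_card
    rw [hrange, h12, hS4] at this
    omega
  have hH6 : Nat.card (H.map ψ) = 6 := by
    have := H.index_mul_card
    rw [hH, h12, ← Subgroup.card_map_of_injective hψ] at this
    omega
  have hsub : ↑(Finset.univ.filter fun σ : Perm (Fin 4) => σ ^ 3 = 1) ⊆
      (H.map ψ : Set (Perm (Fin 4))) := by
    intro σ hσ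
    simp only [Finset.coe_filter, Finset.mem_univ, true_and, Set.mem_ofPred_eq] at hσ
    obtain ⟨g, rfl⟩ := Subgroup.mem_of_index_eq_two_of_pow_three_eq_one hrange2 hσ
    refine ⟨g, Subgroup.mem_of_index_eq_two_of_pow_three_eq_one hH (hψ ?_), rfl⟩
    rwa [map_pow, map_one]
  have := Set.ncard_le_ncard hsub
  rw [Set.ncard_coe_finset, Perm.card_filter_pow_three_eq_one_fin_four,
    ← Nat.card_coe_set_eq, SetLike.coe_sort_coe, hH6] at this
  omega

end Perm

namespace QuarticTrinomial

open Polynomial.Gal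

theorem nonempty_gal_mulEquiv_perm {F : Type*} [Field F] {p q : F}
    (hirr : Irreducible (X ^ 4 + C p * X + C q)) (hsep : (X ^ 4 + C p * X + C q).Separable)
    (hres : Irreducible (X ^ 3 - C (4 * q) * X - C (p ^ 2)))
    (hdisc : ¬ IsSquare (256 * q ^ 3 - 27 * p ^ 4)) :
    Nonempty ((X ^ 4 + C p * X + C q).Gal ≃* Equiv.Perm (Fin 4)) := by
  set f : F[X] := X ^ 4 + C p * X + C q
  set K := f.SplittingField
  have hmon : f.Monic := by unfold f; monicity!
  have hdeg : f.natDegree = 4 := by unfold f; compute_degree!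
  have hmap : f.map (algebraMap F K) = X ^ 4 + C (algebraMap F K p) * X + C (algebraMap F K q) := by
    simp [f]
  obtain ⟨r₁, r₂, r₃, r₄, hroots⟩ := (SplittingField.splits f).exists_eq_prod_of_natDegree_eq_four
    (hmon.map _) (by rw [natDegree_map, hdeg])
  rw [hmap] at hroots
  have h4 : 4 ∣ Nat.card f.Gal := by
    have := natDegree_dvd_card hsep hirr (x := r₁) (by
      rw [aeval_def, eval₂_eq_eval_map, hmap, ← hroots]; simp)
    rwa [hdeg] at this
  have h3 : 3 ∣ Nat.card f.Gal := by
    have := natDegree_dvd_card hsep hres (x := r₁ * r₂ + r₃ * r₄) (by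
      simpa [map_ofNat] using resolvent_eq_zero hroots)
    rwa [show (X ^ 3 - C (4 * q) * X - C (p ^ 2) : F[X]).natDegree = 3 by compute_degree!] at this
  have hquad : Irreducible (X ^ 2 - C (256 * q ^ 3 - 27 * p ^ 4)) :=
    X_pow_sub_C_irreducible_of_prime Nat.prime_two fun c hc => hdisc ⟨c, by rw [← hc, sq]⟩
  have hidx := index_fixingSubgroup_adjoin hsep hquad
    (x := (r₁ - r₂) * (r₁ - r₃) * (r₁ - r₄) * (r₂ - r₃) * (r₂ - r₄) * (r₃ - r₄))
    (by simpa [sub_eq_zero, map_ofNat] using sq_prod_sub_eq_discr hroots)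
  rw [natDegree_X_pow_sub_C] at hidx
  obtain ⟨ψ, hψ⟩ := exists_injective_perm_fin hsep hdeg
  exact ⟨MulEquiv.ofBijective ψ <| bijective_of_injective_perm_fin_four hψ
    (Nat.Coprime.mul_dvd_of_dvd_of_dvd (by norm_num) h4 h3) hidx⟩

end QuarticTrinomial

theorem Polynomial.Monic.eq_X_sq_add_C_mul_X_add_C {R : Type*} [CommSemiring R] {p : R[X]}
    (hp : p.Monic) (h : p.natDegree = 2) : p = X ^ 2 + C (p.coeff 1) * X + C (p.coeff 0) := by
  rw [hp.as_sum, h]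
  simp [Finset.sum_range_succ]
  ring

theorem quadratic_mul_quadratic_ne_X_pow_four_add_X_add_one (a c a' c' : ZMod 2) :
    (X ^ 2 + C a * X + C c) * (X ^ 2 + C a' * X + C c') ≠ X ^ 4 + X + 1 := by
  intro h
  have hexp : (X ^ 2 + C a * X + C c) * (X ^ 2 + C a' * X + C c') =
      X ^ 4 + C (a + a') * X ^ 3 + C (c + c' + a * a') * X ^ 2 + C (a * c' + a' * c) * X
        + C (c * c') := by
    simp only [map_add, map_mul]; ring
  rw [hexp] at h
  have h3 := congrArg (coeff · 3) h
  have h1 := congrArg (coeff · 1) h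
  have h0 := congrArg (coeff · 0) h
  simp only [coeff_add, coeff_C_mul, coeff_X_pow, coeff_X, coeff_C, coeff_one] at h3 h1 h0
  norm_num at h3 h1 h0
  obtain ⟨rfl, rfl⟩ := h0
  rw [mul_one, mul_one] at h1
  exact one_ne_zero (h1.symm.trans h3)

theorem irreducible_X_pow_four_add_X_add_one_zmod_two :
    Irreducible (X ^ 4 + X + 1 : (ZMod 2)[X]) := by
  have hmon : (X ^ 4 + X + 1 : (ZMod 2)[X]).Monic := by monicity!
  have hdeg : (X ^ 4 + X + 1 : (ZMod 2)[X]).natDegree = 4 := by compute_degree!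
  have hroot : ∀ x : ZMod 2, ¬ (X ^ 4 + X + 1 : (ZMod 2)[X]).IsRoot x := by
    simp only [IsRoot, eval_add, eval_pow, eval_X, eval_one]
    decide
  rw [hmon.irreducible_iff_natDegree', hdeg]
  refine ⟨fun h => by simp [h] at hdeg, fun f g hf hg hfg hg_deg => ?_⟩
  have hdeg' : f.natDegree + g.natDegree = 4 := by rw [← hf.natDegree_mul hg, hfg, hdeg]
  obtain hg1 | hg2 : g.natDegree = 1 ∨ g.natDegree = 2 := by simp at hg_deg; omega
  · obtain ⟨c, rfl⟩ : ∃ c, g = X + C c := ⟨g.coeff 0, hg.eq_X_add_C hg1⟩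
    apply hroot (-c)
    rw [IsRoot, ← hfg, eval_mul, eval_add, eval_X, eval_C, neg_add_cancel, mul_zero]
  · rw [hf.eq_X_sq_add_C_mul_X_add_C (by omega), hg.eq_X_sq_add_C_mul_X_add_C hg2] at hfg
    exact quadratic_mul_quadratic_ne_X_pow_four_add_X_add_one _ _ _ _ hfg

theorem irreducible_X_pow_four_add_C_mul_X_add_C {b : ℤ} (hb : Squarefree b) :
    Irreducible (X ^ 4 + C b * X + C b : ℤ[X]) := by
  have hmon : (X ^ 4 + C b * X + C b : ℤ[X]).Monic := by monicity!
  have hdeg : (X ^ 4 + C b * X + C b : ℤ[X]).natDegree = 4 := by compute_degree!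
  rcases b.even_or_odd with heven | hodd
  · have hprime : (Ideal.span {(2 : ℤ)}).IsPrime :=
      (Ideal.span_singleton_prime two_ne_zero).mpr Int.prime_two
    refine (hmon.isEisensteinAt_of_mem_of_notMem hprime.ne_top ?_ ?_).irreducible hprime
      hmon.isPrimitive (by omega)
    · intro n hn
      rw [hdeg] at hn
      interval_cases n <;>
        simp [Ideal.mem_span_singleton, coeff_X, coeff_C, even_iff_two_dvd.mp heven, -eq_intCast]
    · rw [Ideal.span_singleton_pow, Ideal.mem_span_singleton]
      simp only [coeff_add, coeff_X_pow, coeff_C_mul, coeff_X, coeff_C]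
      norm_num
      exact fun h => absurd (hb 2 h) (by decide)
  · refine hmon.irreducible_of_irreducible_map (Int.castRingHom (ZMod 2)) _ ?_
    have hb1 : (b : ZMod 2) = 1 := ZMod.intCast_eq_one_iff_odd.mpr hodd
    have hmap : (X ^ 4 + C b * X + C b : ℤ[X]).map (Int.castRingHom (ZMod 2)) = X ^ 4 + X + 1 := by
      simp only [Polynomial.map_add, Polynomial.map_pow, Polynomial.map_mul, map_X, map_C,
        Int.coe_castRingHom, hb1, map_one, one_mul]
    rw [hmap]
    exact irreducible_X_pow_four_add_X_add_one_zmod_two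

theorem irreducible_X_pow_four_add_C_mul_X_add_C_rat {b : ℤ} (hb : Squarefree b) :
    Irreducible (X ^ 4 + C (b : ℚ) * X + C (b : ℚ)) := by
  have hmon : (X ^ 4 + C b * X + C b : ℤ[X]).Monic := by monicity!
  have h := irreducible_X_pow_four_add_C_mul_X_add_C hb
  rw [IsPrimitive.Int.irreducible_iff_irreducible_map_cast hmon.isPrimitive] at h
  simpa using h

theorem Int.pow_three_sub_four_mul_sub_sq_ne_zero {b : ℤ} (hb : Squarefree b) (h3 : b ≠ 3)
    (h5 : b ≠ 5) (r : ℤ) : r ^ 3 - 4 * b * r - b ^ 2 ≠ 0 := by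
  intro h
  obtain ⟨s, rfl⟩ : b ∣ r :=
    (hb.dvd_pow_iff_dvd three_ne_zero).mp ⟨4 * r + b, by linear_combination h⟩
  have key : s * (b * s ^ 2 - 4) = 1 := by
    have : b ^ 2 * (s * (b * s ^ 2 - 4) - 1) = 0 := by linear_combination h
    linear_combination (mul_eq_zero.mp this).resolve_left (pow_ne_zero 2 hb.ne_zero)
  rcases Int.eq_one_or_neg_one_of_mul_eq_one key with rfl | rfl
  · exact h5 (by linarith)
  · exact h3 (by linarith)

theorem irreducible_resolvent_rat {b : ℤ} (hb : Squarefree b) (h3 : b ≠ 3) (h5 : b ≠ 5) :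
    Irreducible (X ^ 3 - C (4 * (b : ℚ)) * X - C ((b : ℚ) ^ 2)) := by
  have hdeg : (X ^ 3 - C (4 * (b : ℚ)) * X - C ((b : ℚ) ^ 2)).natDegree = 3 := by compute_degree!
  refine irreducible_of_degree_le_three_of_not_isRoot (by rw [Finset.mem_Icc, hdeg]; omega)
    fun x hx => ?_
  have hx' : aeval x (X ^ 3 - C (4 * b) * X - C (b ^ 2) : ℤ[X]) = 0 := by
    simpa [map_ofNat] using hx
  obtain ⟨r, rfl⟩ := isInteger_of_is_root_of_monic (by monicity!) hx'
  apply Int.pow_three_sub_four_mul_sub_sq_ne_zero hb h3 h5 r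
  simp at hx
  exact_mod_cast hx

theorem Int.not_isSquare_mul_256_sub_27_mul {b : ℤ} (hb : b ≠ 0) :
    ¬ IsSquare (b * (256 - 27 * b)) := by
  intro h
  have hpos : 0 ≤ b * (256 - 27 * b) := h.nonneg
  have h1 : 1 ≤ b := by
    by_contra! h
    nlinarith [lt_of_le_of_ne (Int.lt_add_one_iff.mp h) hb]
  have h9 : b ≤ 9 := by nlinarith
  interval_cases b <;> norm_num at h

theorem not_isSquare_discr_rat {b : ℤ} (hb : b ≠ 0) :
    ¬ IsSquare (256 * (b : ℚ) ^ 3 - 27 * (b : ℚ) ^ 4) := by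
  intro h
  have hdiv : ((b * (256 - 27 * b) : ℤ) : ℚ) = (256 * (b : ℚ) ^ 3 - 27 * (b : ℚ) ^ 4) / (b : ℚ) ^ 2 := by
    field_simp
    push_cast
    ring
  have hsq := h.div (IsSquare.sq (b : ℚ))
  rw [← hdiv, Rat.isSquare_intCast_iff] at hsq
  exact Int.not_isSquare_mul_256_sub_27_mul hb hsq

theorem galois_group_quartic_bb_general (b : ℤ) (hsf : Squarefree b) (h3 : b ≠ 3)
    (h5 : b ≠ 5) :
    Nonempty ((X ^ 4 + C (b : ℚ) * X + C (b : ℚ)).Gal ≃* Equiv.Perm (Fin 4)) := by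
  have hirr := irreducible_X_pow_four_add_C_mul_X_add_C_rat hsf
  exact QuarticTrinomial.nonempty_gal_mulEquiv_perm hirr hirr.separable
    (irreducible_resolvent_rat hsf h3 h5) (not_isSquare_discr_rat hsf.ne_zero)

/-- For a square-free integer `b ∉ {0, 3, 5}` with `256 - 27b` square-free, the
Galois group of the splitting field of `x^4 + bx + b` over `ℚ` is `S₄`. -/
theorem galois_group_quartic_bb (b : ℤ) (hsf : Squarefree b) (h0 : b ≠ 0) (h3 : b ≠ 3)
    (h5 : b ≠ 5) (hsf' : Squarefree (256 - 27 * b)) :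
    Nonempty ((X ^ 4 + C (b : ℚ) * X + C (b : ℚ)).Gal ≃* Equiv.Perm (Fin 4)) :=
  galois_group_quartic_bb_general b hsf h3 h5
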